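/- Let ρ = p^ℕ be a Bernoulli product measure on D^ℕ with probability weight vector p = (p_1,…,p_m), and let s = ∑_{i=1}^m p_i². Let J1, J2 be closed intervals with J1 × J2 ⊂ Γ(s, 1), and assume J1 is a set of transversality for a subset 𝓑̃′ = ⋃_{k≥0} x^k 𝓑′ of 𝓑̃ (with 𝓑′ ⊂ 𝓑). Then there is a constant C = C(J1,J2) such that for every λ ∈ J2 for which ν_λ is absolutely continuous with density f_λ ∈ L²(ℝ): limsup_{r→0} r^{−2} ∫_{𝓑̃′} Leb{γ ∈ J1 : |Π_{γ,λ}(ω)| ≤ r} dη(ω) ≤ C · ‖f_λ‖_{L²}². -/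

import Mathlib

/-!
Split `𝓑̃′` according to the power `x ^ k` dividing a series. For `ω = x ^ k c` with `c ∈ 𝓑′`,
a point `γ ∈ J₁ ⊆ [a₁, 1)` with `|Π_{γ,λ}(ω)| ≤ r` has `|c(γ)| ≤ r / a₁ ^ k`, so transversality
bounds the measure of these `γ` by a multiple of `M r / a₁ ^ k`; and there are none unless
`|ω(λ)| ≤ r`. Under `η`, "`ω` vanishes to order `k` and `|ω(λ)| ≤ r`" means that two
independent `ρ`-samples share their first `k` digits and have `r`-close `Π_λ`-values. By
self-similarity of the Bernoulli measure this has probability at most `s ^ k` times that of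
two samples being `r / λ ^ k`-close, and an `L²` density `f` of `ν_λ` bounds the latter by
`4 (r / λ ^ k) ‖f‖₂²`. The `k`-th term is thus `8 M r² ‖f‖₂² (s / (a₁ λ)) ^ k`, a geometric
series because `s < a₁ a₂ ≤ a₁ λ`.
-/

open MeasureTheory Filter Set
open scoped ENNReal Topology

noncomputable section

/-- `Γ(a,b) = {(γ,λ) : 0 < γ < λ < 1, 1/m < λ, a < γλ < b}`. -/
def Gamma (m : ℕ) (a b : ℝ) : Set (ℝ × ℝ) :=
  {p | 0 < p.1 ∧ p.1 < p.2 ∧ p.2 < 1 ∧ 1 / (m : ℝ) < p.2 ∧ a < p.1 * p.2 ∧ p.1 * p.2 < b}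

/-- Evaluation of the power series with coefficient sequence `c` at `x`. -/
def Beval (c : ℕ → ℝ) (x : ℝ) : ℝ := ∑' n, c n * x ^ n

/-- Membership in `𝓑̃`: all coefficients lie in `D − D`. -/
def memBtilde (m : ℕ) (d : Fin m → ℝ) (c : ℕ → ℝ) : Prop :=
  ∀ n, ∃ i j, c n = d i - d j

/-- Membership in `𝓑`: all coefficients lie in `D − D` and the constant term is nonzero. -/
def memB (m : ℕ) (d : Fin m → ℝ) (c : ℕ → ℝ) : Prop :=
  memBtilde m d c ∧ c 0 ≠ 0

/-- `ρ` is the Bernoulli product measure with weights `p`. -/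
def IsBernoulliWith {α : Type*} [MeasurableSpace α] (p : α → ℝ≥0∞)
    (ρ : Measure (ℕ → α)) : Prop :=
  IsProbabilityMeasure ρ ∧
    ∀ (n : ℕ) (w : Fin n → α), ρ {ω | ∀ i : Fin n, ω i.1 = w i} = ∏ i, p (w i)

/-- `Π_λ(ω) = ∑ₙ d(ωₙ) λⁿ`. -/
def PiOne (m : ℕ) (d : Fin m → ℝ) (l : ℝ) (ω : ℕ → Fin m) : ℝ := ∑' n, d (ω n) * l ^ n

/-- `η`: the pushforward of `ρ × ρ` under the coordinatewise difference map. -/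
def etaMeasure (m : ℕ) (d : Fin m → ℝ) (ρ : Measure (ℕ → Fin m)) : Measure (ℕ → ℝ) :=
  (ρ.prod ρ).map (fun q n => d (q.1 n) - d (q.2 n))

/-- `J` is a set of transversality for `B ⊆ 𝓑`. -/
def IsTransvOn (J : Set ℝ) (B : Set (ℕ → ℝ)) : Prop :=
  ∃ M : ℝ, 0 < M ∧ ∀ c ∈ B, ∀ r : ℝ, 0 < r →
    volume {α ∈ J | |Beval c α| < r} < ENNReal.ofReal (M * r)

/-- Multiplication of a coefficient sequence by `x^k`. -/
def shiftSeq (k : ℕ) (c : ℕ → ℝ) : ℕ → ℝ := fun n => if n < k then 0 else c (n - k)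


section PowerSeries

variable {c : ℕ → ℝ} {D x : ℝ}

lemma summable_mul_pow_of_abs_le (hc : ∀ n, |c n| ≤ D) (hx : |x| < 1) :
    Summable fun n => c n * x ^ n :=
  .of_norm_bounded ((summable_geometric_of_lt_one (abs_nonneg x) hx).mul_left D) fun n => by
    rw [Real.norm_eq_abs, abs_mul, abs_pow]
    exact mul_le_mul_of_nonneg_right (hc n) (by positivity)

lemma Beval_eq_sum_range_add (hc : ∀ n, |c n| ≤ D) (hx : |x| < 1) (k : ℕ) :
    Beval c x = ∑ n ∈ Finset.range k, c n * x ^ n + x ^ k * Beval (fun n => c (n + k)) x := by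
  rw [Beval, Beval, ← (summable_mul_pow_of_abs_le hc hx).sum_add_tsum_nat_add k,
    ← tsum_mul_left]
  congr 2 with n
  ring

lemma Beval_shiftSeq (hc : ∀ n, |c n| ≤ D) (hx : |x| < 1) (k : ℕ) :
    Beval (shiftSeq k c) x = x ^ k * Beval c x := by
  have hshift : ∀ n, |shiftSeq k c n| ≤ max D 0 := fun n => by
    unfold shiftSeq; split_ifs <;> simp [hc]
  rw [Beval_eq_sum_range_add hshift hx k, Finset.sum_eq_zero fun n hn => by
    simp [shiftSeq, Finset.mem_range.1 hn]]
  simp [shiftSeq]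

lemma Beval_sub {c' : ℕ → ℝ} (hc : ∀ n, |c n| ≤ D) (hc' : ∀ n, |c' n| ≤ D) (hx : |x| < 1) :
    Beval (c - c') x = Beval c x - Beval c' x := by
  simp only [Beval, Pi.sub_apply, sub_mul]
  exact (summable_mul_pow_of_abs_le hc hx).tsum_sub (summable_mul_pow_of_abs_le hc' hx)

lemma measurable_Beval (x : ℝ) : Measurable fun c => Beval c x :=
  Measurable.tsum fun n => (measurable_pi_apply n).mul_const _

end PowerSeries

section Cylinders

variable {α : Type*}

def prefixCylinder {n : ℕ} (w : Fin n → α) : Set (ℕ → α) := {ω | ∀ i : Fin n, ω i = w i}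

def prefixCylinders : Set (Set (ℕ → α)) := {S | ∃ n, ∃ w : Fin n → α, S = prefixCylinder w}

def seqTail (k : ℕ) (ω : ℕ → α) : ℕ → α := fun n => ω (n + k)

lemma prefixCylinder_inter_preimage_seqTail {k n : ℕ} (w : Fin k → α) (v : Fin n → α) :
    prefixCylinder w ∩ seqTail k ⁻¹' prefixCylinder v = prefixCylinder (Fin.append w v) := by
  ext ω
  simp only [prefixCylinder, seqTail, mem_inter_iff, mem_preimage, mem_ofPred_eq,
    Fin.forall_fin_add, Fin.append_left, Fin.append_right, Fin.val_castAdd, Fin.val_natAdd,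
    add_comm]

lemma prefixCylinder_subset_of_le {n n' : ℕ} (h : n ≤ n') {w : Fin n → α} {w' : Fin n' → α}
    (hne : (prefixCylinder w ∩ prefixCylinder w').Nonempty) :
    prefixCylinder w' ⊆ prefixCylinder w := by
  obtain ⟨ω₀, h₀, h₀'⟩ := hne
  intro ω hω i
  rw [← h₀ i]
  exact (hω (i.castLE h)).trans (h₀' (i.castLE h)).symm

lemma isPiSystem_prefixCylinders : IsPiSystem (prefixCylinders (α := α)) := by
  rintro _ ⟨n, w, rfl⟩ _ ⟨n', w', rfl⟩ hne
  rcases le_total n n' with h | h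
  · exact ⟨n', w', inter_eq_self_of_subset_right (prefixCylinder_subset_of_le h hne)⟩
  · rw [inter_comm] at hne ⊢
    exact ⟨n, w, inter_eq_self_of_subset_right (prefixCylinder_subset_of_le h hne)⟩

variable [MeasurableSpace α]

lemma measurable_seqTail (k : ℕ) : Measurable (seqTail (α := α) k) :=
  measurable_pi_lambda _ fun n => measurable_pi_apply (n + k)

variable [MeasurableSingletonClass α]

lemma measurableSet_prefixCylinder {n : ℕ} (w : Fin n → α) :
    MeasurableSet (prefixCylinder w) := by
  simp only [prefixCylinder, ofPred_forall]
  exact .iInter fun i => (measurableSet_singleton (w i)).preimage (measurable_pi_apply _)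

lemma generateFrom_prefixCylinders [Countable α] :
    MeasurableSpace.generateFrom (prefixCylinders (α := α)) = MeasurableSpace.pi := by
  refine le_antisymm (MeasurableSpace.generateFrom_le ?_) (iSup_le fun n => ?_)
  · rintro _ ⟨n, w, rfl⟩
    exact measurableSet_prefixCylinder w
  refine measurable_iff_comap_le.1
    (@measurable_to_countable' α (ℕ → α) _ _ (MeasurableSpace.generateFrom _) _ fun a => ?_)
  have : (fun ω : ℕ → α => ω n) ⁻¹' {a}
      = ⋃ w ∈ {w : Fin (n + 1) → α | w (Fin.last n) = a}, prefixCylinder w := by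
    ext ω
    simp only [mem_preimage, mem_singleton_iff, mem_iUnion, mem_ofPred_eq, prefixCylinder,
      exists_prop]
    exact ⟨fun h => ⟨fun i => ω i, h, fun i => rfl⟩, fun ⟨w, hw, h⟩ => hw ▸ h (Fin.last n)⟩
  rw [this]
  exact .biUnion (to_countable _) fun w _ =>
    MeasurableSpace.measurableSet_generateFrom ⟨n + 1, w, rfl⟩

end Cylinders

namespace IsBernoulliWith

variable {α : Type*} [MeasurableSpace α] {p : α → ℝ≥0∞} {ρ : Measure (ℕ → α)}

lemma measure_prefixCylinder (hρ : IsBernoulliWith p ρ) {n : ℕ} (w : Fin n → α) :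
    ρ (prefixCylinder w) = ∏ i, p (w i) :=
  hρ.2 n w

variable [MeasurableSingletonClass α]

lemma map_seqTail_restrict_prefixCylinder [Countable α] (hρ : IsBernoulliWith p ρ) {k : ℕ}
    (w : Fin k → α) : (ρ.restrict (prefixCylinder w)).map (seqTail k) = (∏ i, p (w i)) • ρ := by
  have := hρ.1
  refine ext_of_generate_finite _ generateFrom_prefixCylinders.symm isPiSystem_prefixCylinders
    ?_ ?_
  · rintro _ ⟨n, v, rfl⟩
    rw [Measure.map_apply (measurable_seqTail k) (measurableSet_prefixCylinder v),
      Measure.restrict_apply (measurable_seqTail k (measurableSet_prefixCylinder v)), inter_comm,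
      prefixCylinder_inter_preimage_seqTail, Measure.smul_apply, smul_eq_mul,
      hρ.measure_prefixCylinder, hρ.measure_prefixCylinder, Fin.prod_univ_add]
    simp only [Fin.append_left, Fin.append_right]
  · rw [Measure.map_apply (measurable_seqTail k) .univ, preimage_univ,
      Measure.restrict_apply_univ, Measure.smul_apply, smul_eq_mul, measure_univ, mul_one,
      hρ.measure_prefixCylinder]

lemma prod_setOf_agree_tail_mem_le [Fintype α] (hρ : IsBernoulliWith p ρ) (k : ℕ)
    {A : Set ((ℕ → α) × (ℕ → α))} (hA : MeasurableSet A) :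
    (ρ.prod ρ) {q | (∀ i < k, q.1 i = q.2 i) ∧ (seqTail k q.1, seqTail k q.2) ∈ A}
      ≤ (∑ a, p a ^ 2) ^ k * (ρ.prod ρ) A := by
  have := hρ.1
  have hcover : {q : (ℕ → α) × (ℕ → α) | (∀ i < k, q.1 i = q.2 i) ∧
        (seqTail k q.1, seqTail k q.2) ∈ A}
      ⊆ ⋃ w : Fin k → α, (prefixCylinder w ×ˢ prefixCylinder w) ∩
          Prod.map (seqTail k) (seqTail k) ⁻¹' A := by
    rintro ⟨ω, ω'⟩ ⟨hagree, hA⟩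
    exact mem_iUnion.2 ⟨fun i => ω i, ⟨fun i => rfl, fun i => (hagree i i.2).symm⟩, hA⟩
  have hpiece (w : Fin k → α) : (ρ.prod ρ) ((prefixCylinder w ×ˢ prefixCylinder w) ∩
      Prod.map (seqTail k) (seqTail k) ⁻¹' A) = (∏ i, p (w i) ^ 2) * (ρ.prod ρ) A := by
    have hC := measurableSet_prefixCylinder w
    rw [inter_comm, ← Measure.restrict_apply' (hC.prod hC), ← Measure.prod_restrict,
      ← Measure.map_apply ((measurable_seqTail k).prodMap (measurable_seqTail k)) hA,
      ← Measure.map_prod_map _ _ (measurable_seqTail k) (measurable_seqTail k),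
      hρ.map_seqTail_restrict_prefixCylinder, Measure.prod_smul_left, Measure.prod_smul_right,
      smul_smul, Measure.smul_apply, smul_eq_mul, ← Finset.prod_mul_distrib]
    simp only [sq]
  calc _ ≤ ∑' w : Fin k → α, (ρ.prod ρ) ((prefixCylinder w ×ˢ prefixCylinder w) ∩
          Prod.map (seqTail k) (seqTail k) ⁻¹' A) :=
        (measure_mono hcover).trans (measure_iUnion_le _)
    _ = _ := by
      rw [tsum_fintype, Finset.sum_congr rfl fun w _ => hpiece w, ← Finset.sum_mul,
        Fintype.sum_pow]

end IsBernoulliWith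

section PairCorrelation

lemma ofReal_mul_ofReal_le_ofReal_sq_add (a b : ℝ) :
    ENNReal.ofReal a * ENNReal.ofReal b ≤ ENNReal.ofReal (a ^ 2) + ENNReal.ofReal (b ^ 2) := by
  rcases le_or_gt a 0 with ha | ha
  · simp [ENNReal.ofReal_of_nonpos ha]
  rcases le_or_gt b 0 with hb | hb
  · simp [ENNReal.ofReal_of_nonpos hb]
  rw [← ENNReal.ofReal_mul ha.le, ← ENNReal.ofReal_add (sq_nonneg a) (sq_nonneg b)]
  exact ENNReal.ofReal_le_ofReal (by nlinarith [sq_nonneg (a - b)])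

variable {t : ℝ}

lemma measurableSet_setOf_abs_sub_le (t : ℝ) : MeasurableSet {z : ℝ × ℝ | |z.1 - z.2| ≤ t} :=
  measurableSet_le (by fun_prop) measurable_const

lemma setLIntegral_setOf_abs_sub_le_comp_fst {F : ℝ → ℝ≥0∞} (hF : AEMeasurable F) :
    ∫⁻ z in {z : ℝ × ℝ | |z.1 - z.2| ≤ t}, F z.1 ∂(volume.prod volume)
      = ENNReal.ofReal (2 * t) * ∫⁻ x, F x := by
  have hsection (x : ℝ) : Prod.mk x ⁻¹' {z : ℝ × ℝ | |z.1 - z.2| ≤ t} = Metric.closedBall x t := by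
    ext y; simp [Real.dist_eq, abs_sub_comm]
  rw [← withDensity_apply _ (measurableSet_setOf_abs_sub_le t), ← prod_withDensity_left₀ hF,
    Measure.prod_apply (measurableSet_setOf_abs_sub_le t)]
  simp_rw [hsection, Real.volume_closedBall, lintegral_const, withDensity_apply _ .univ,
    Measure.restrict_univ]

lemma setLIntegral_setOf_abs_sub_le_comp_snd {F : ℝ → ℝ≥0∞} (hF : AEMeasurable F) :
    ∫⁻ z in {z : ℝ × ℝ | |z.1 - z.2| ≤ t}, F z.2 ∂(volume.prod volume)
      = ENNReal.ofReal (2 * t) * ∫⁻ x, F x := by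
  have hsection (y : ℝ) : (fun x => (x, y)) ⁻¹' {z : ℝ × ℝ | |z.1 - z.2| ≤ t}
      = Metric.closedBall y t := by
    ext x; simp [Real.dist_eq]
  rw [← withDensity_apply _ (measurableSet_setOf_abs_sub_le t), ← prod_withDensity_right₀ hF,
    Measure.prod_apply_symm (measurableSet_setOf_abs_sub_le t)]
  simp_rw [hsection, Real.volume_closedBall, lintegral_const, withDensity_apply _ .univ,
    Measure.restrict_univ]

lemma withDensity_prod_setOf_abs_sub_le {f : ℝ → ℝ} (hf : MemLp f 2 volume) (ht : 0 ≤ t) :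
    ((volume.withDensity fun x => ENNReal.ofReal (f x)).prod
        (volume.withDensity fun x => ENNReal.ofReal (f x))) {z | |z.1 - z.2| ≤ t}
      ≤ ENNReal.ofReal (4 * t) * ENNReal.ofReal (∫ x, f x ^ 2) := by
  have hq : AEMeasurable (fun x => ENNReal.ofReal (f x)) :=
    hf.aestronglyMeasurable.aemeasurable.ennreal_ofReal
  have hQ : AEMeasurable (fun x => ENNReal.ofReal (f x ^ 2)) :=
    (hf.aestronglyMeasurable.aemeasurable.pow_const 2).ennreal_ofReal
  rw [prod_withDensity₀ hq hq, withDensity_apply _ (measurableSet_setOf_abs_sub_le t),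
    ofReal_integral_eq_lintegral_ofReal hf.integrable_sq (ae_of_all _ fun x => sq_nonneg _)]
  calc _ ≤ ∫⁻ z in {z : ℝ × ℝ | |z.1 - z.2| ≤ t},
          (ENNReal.ofReal (f z.1 ^ 2) + ENNReal.ofReal (f z.2 ^ 2)) ∂(volume.prod volume) :=
        lintegral_mono fun z => ofReal_mul_ofReal_le_ofReal_sq_add _ _
    _ = _ := by
      rw [lintegral_add_left' (f := fun z : ℝ × ℝ => ENNReal.ofReal (f z.1 ^ 2))
          (hQ.comp_fst (ν := volume)).restrict,
        setLIntegral_setOf_abs_sub_le_comp_fst hQ,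
        setLIntegral_setOf_abs_sub_le_comp_snd hQ, ← add_mul,
        ← ENNReal.ofReal_add (by positivity) (by positivity)]
      congr 2
      ring

lemma prod_setOf_abs_sub_le_of_map_eq_withDensity {Ω : Type*} [MeasurableSpace Ω]
    {μ : Measure Ω} [SFinite μ] {Φ : Ω → ℝ} (hΦ : Measurable Φ) {f : ℝ → ℝ}
    (hmap : μ.map Φ = volume.withDensity fun x => ENNReal.ofReal (f x)) (hf : MemLp f 2 volume)
    (ht : 0 ≤ t) :
    (μ.prod μ) {q | |Φ q.1 - Φ q.2| ≤ t}
      ≤ ENNReal.ofReal (4 * t) * ENNReal.ofReal (∫ x, f x ^ 2) := by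
  rw [show {q : Ω × Ω | |Φ q.1 - Φ q.2| ≤ t} = Prod.map Φ Φ ⁻¹' {z | |z.1 - z.2| ≤ t} from rfl,
    ← Measure.map_apply (hΦ.prodMap hΦ) (measurableSet_setOf_abs_sub_le t),
    ← Measure.map_prod_map _ _ hΦ hΦ, hmap]
  exact withDensity_prod_setOf_abs_sub_le hf ht

end PairCorrelation

section DigitExpansion

variable {m : ℕ} {d : Fin m → ℝ} {D l : ℝ}

@[fun_prop]
lemma measurable_PiOne : Measurable (PiOne m d l) := by
  unfold PiOne
  fun_prop

lemma PiOne_sub_eq_pow_mul_of_agree (hd : ∀ i, |d i| ≤ D) (hl : |l| < 1) {k : ℕ}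
    {ω ω' : ℕ → Fin m} (h : ∀ i < k, ω i = ω' i) :
    PiOne m d l ω - PiOne m d l ω'
      = l ^ k * (PiOne m d l (seqTail k ω) - PiOne m d l (seqTail k ω')) := by
  have hsplit (ω : ℕ → Fin m) :=
    Beval_eq_sum_range_add (c := fun n => d (ω n)) (fun n => hd (ω n)) hl k
  change Beval _ l - Beval _ l = _
  rw [hsplit ω, hsplit ω', Finset.sum_congr rfl fun n hn => by rw [h n (Finset.mem_range.1 hn)]]
  simp only [PiOne, Beval, seqTail]
  ring

lemma IsBernoulliWith.prod_setOf_agree_PiOne_close_le {p : Fin m → ℝ≥0∞}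
    {ρ : Measure (ℕ → Fin m)} (hρ : IsBernoulliWith p ρ) (hd : ∀ i, |d i| ≤ D) (hl0 : 0 < l)
    (hl1 : l < 1) (k : ℕ) (t : ℝ) :
    (ρ.prod ρ) {q | (∀ i < k, q.1 i = q.2 i) ∧ |PiOne m d l q.1 - PiOne m d l q.2| ≤ t}
      ≤ (∑ a, p a ^ 2) ^ k * (ρ.prod ρ) {q | |PiOne m d l q.1 - PiOne m d l q.2| ≤ t / l ^ k} := by
  refine (measure_mono ?_).trans (hρ.prod_setOf_agree_tail_mem_le k
    (measurableSet_le (by fun_prop) measurable_const))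
  rintro ⟨ω, ω'⟩ ⟨hagree, hclose⟩
  refine ⟨hagree, ?_⟩
  rw [PiOne_sub_eq_pow_mul_of_agree hd (by rwa [abs_of_pos hl0]) hagree, abs_mul, abs_pow,
    abs_of_pos hl0] at hclose
  rw [mem_ofPred_eq, le_div_iff₀ (pow_pos hl0 k)]
  linarith

end DigitExpansion

section Transversality

lemma abs_le_of_sqrt_sq_add_sq_le {x y r : ℝ} (h : √(x ^ 2 + y ^ 2) ≤ r) : |x| ≤ r :=
  (Real.abs_le_sqrt (le_add_of_nonneg_right (sq_nonneg y))).trans h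

variable {a b M r D : ℝ}

lemma volume_setOf_sqrt_Beval_shiftSeq_le {c : ℕ → ℝ} (hc : ∀ n, |c n| ≤ D) (ha : 0 < a)
    (hb : b < 1)
    (htr : ∀ r : ℝ, 0 < r → volume {α ∈ Icc a b | |Beval c α| < r} < ENNReal.ofReal (M * r))
    (hr : 0 < r) (k : ℕ) (y : ℝ) :
    volume {γ ∈ Icc a b | √(Beval (shiftSeq k c) γ ^ 2 + y ^ 2) ≤ r}
      ≤ ENNReal.ofReal (M * (2 * r / a ^ k)) := by
  -- transversality is a strict bound, hence the room `r / a ^ k < 2 * r / a ^ k`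
  refine (measure_mono ?_).trans (htr _ (by positivity)).le
  rintro γ ⟨hγ, hle⟩
  refine ⟨hγ, ?_⟩
  have hγ0 : 0 < γ := ha.trans_le hγ.1
  have hsmall := abs_le_of_sqrt_sq_add_sq_le hle
  rw [Beval_shiftSeq hc (by rw [abs_of_pos hγ0]; exact hγ.2.trans_lt hb), abs_mul, abs_pow,
    abs_of_pos hγ0] at hsmall
  have : a ^ k * |Beval c γ| ≤ r :=
    (mul_le_mul_of_nonneg_right (pow_le_pow_left₀ ha.le hγ.1 k) (abs_nonneg _)).trans hsmall
  rw [lt_div_iff₀ (by positivity)]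
  linarith

def vanishSmallSet (k : ℕ) (l r : ℝ) : Set (ℕ → ℝ) := {ω | (∀ i < k, ω i = 0) ∧ |Beval ω l| ≤ r}

lemma measurableSet_vanishSmallSet (k : ℕ) (l r : ℝ) : MeasurableSet (vanishSmallSet k l r) := by
  refine MeasurableSet.inter ?_ (measurableSet_le (measurable_Beval l).abs measurable_const)
  exact measurableSet_setOfPred.2 <| .forall fun i => .imp measurable_const <|
    measurableSet_setOfPred.1 (measurableSet_eq_fun (measurable_pi_apply i) measurable_const)

lemma volume_setOf_sqrt_Beval_shiftSeq_le_indicator {c : ℕ → ℝ} (hc : ∀ n, |c n| ≤ D)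
    (ha : 0 < a) (hb : b < 1)
    (htr : ∀ r : ℝ, 0 < r → volume {α ∈ Icc a b | |Beval c α| < r} < ENNReal.ofReal (M * r))
    (hr : 0 < r) (k : ℕ) (l : ℝ) :
    volume {γ ∈ Icc a b | √(Beval (shiftSeq k c) γ ^ 2 + Beval (shiftSeq k c) l ^ 2) ≤ r}
      ≤ (vanishSmallSet k l r).indicator (fun _ => ENNReal.ofReal (M * (2 * r / a ^ k)))
          (shiftSeq k c) := by
  by_cases hmem : shiftSeq k c ∈ vanishSmallSet k l r
  · rw [indicator_of_mem hmem]
    exact volume_setOf_sqrt_Beval_shiftSeq_le hc ha hb htr hr k _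
  · have hempty : {γ ∈ Icc a b |
        √(Beval (shiftSeq k c) γ ^ 2 + Beval (shiftSeq k c) l ^ 2) ≤ r} = ∅ :=
      eq_empty_of_forall_notMem fun γ ⟨_, hγ⟩ => hmem
        ⟨fun i hi => by simp [shiftSeq, hi], abs_le_of_sqrt_sq_add_sq_le (by rwa [add_comm])⟩
    rw [hempty, measure_empty]
    exact zero_le

variable {m : ℕ} {d : Fin m → ℝ} {l : ℝ}

lemma preimage_vanishSmallSet_subset (hd : Function.Injective d) (hD : ∀ i, |d i| ≤ D)
    (hl : |l| < 1) (k : ℕ) :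
    (fun q : (ℕ → Fin m) × (ℕ → Fin m) => fun n => d (q.1 n) - d (q.2 n)) ⁻¹'
        vanishSmallSet k l r
      ⊆ {q | (∀ i < k, q.1 i = q.2 i) ∧ |PiOne m d l q.1 - PiOne m d l q.2| ≤ r} := by
  rintro ⟨ω, ω'⟩ ⟨hzero, hclose⟩
  refine ⟨fun i hi => hd (sub_eq_zero.1 (hzero i hi)), ?_⟩
  change |Beval ((fun n => d (ω n)) - fun n => d (ω' n)) l| ≤ r at hclose
  rwa [Beval_sub (fun n => hD (ω n)) (fun n => hD (ω' n)) hl] at hclose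

lemma setLIntegral_image_shiftSeq_le {ρ : Measure (ℕ → Fin m)} {B' : Set (ℕ → ℝ)}
    (hd : Function.Injective d) (hD : ∀ i, |d i| ≤ D) (hB' : ∀ c ∈ B', memBtilde m d c)
    (htr : ∀ c ∈ B', ∀ r : ℝ, 0 < r →
      volume {α ∈ Icc a b | |Beval c α| < r} < ENNReal.ofReal (M * r))
    (ha : 0 < a) (hb : b < 1) (hl : |l| < 1) (hr : 0 < r) (k : ℕ) :
    ∫⁻ ω in shiftSeq k '' B', volume {γ ∈ Icc a b | √(Beval ω γ ^ 2 + Beval ω l ^ 2) ≤ r}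
        ∂(etaMeasure m d ρ)
      ≤ ENNReal.ofReal (M * (2 * r / a ^ k)) *
        (ρ.prod ρ) {q | (∀ i < k, q.1 i = q.2 i) ∧ |PiOne m d l q.1 - PiOne m d l q.2| ≤ r} := by
  set C := ENNReal.ofReal (M * (2 * r / a ^ k))
  have hW := measurableSet_vanishSmallSet k l r
  have hbound : ∀ ω ∈ shiftSeq k '' B',
      volume {γ ∈ Icc a b | √(Beval ω γ ^ 2 + Beval ω l ^ 2) ≤ r}
        ≤ (vanishSmallSet k l r).indicator (fun _ => C) ω := by
    rintro _ ⟨c, hc, rfl⟩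
    refine volume_setOf_sqrt_Beval_shiftSeq_le_indicator (D := 2 * D) (fun n => ?_) ha hb
      (htr c hc) hr k l
    obtain ⟨i, j, hij⟩ := hB' c hc n
    rw [hij]
    linarith [abs_sub (d i) (d j), hD i, hD j]
  calc _ ≤ ∫⁻ ω in shiftSeq k '' B', (vanishSmallSet k l r).indicator (fun _ => C) ω
          ∂(etaMeasure m d ρ) := setLIntegral_mono (measurable_const.indicator hW) hbound
    _ ≤ ∫⁻ ω, (vanishSmallSet k l r).indicator (fun _ => C) ω ∂(etaMeasure m d ρ) :=
        setLIntegral_le_lintegral _ _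
    _ = C * etaMeasure m d ρ (vanishSmallSet k l r) := lintegral_indicator_const hW _
    _ ≤ _ := by
      rw [etaMeasure, Measure.map_apply (by fun_prop) hW]
      gcongr
      exact preimage_vanishSmallSet_subset hd hD hl k

variable {p : Fin m → ℝ} {ρ : Measure (ℕ → Fin m)} {B' : Set (ℕ → ℝ)} {f : ℝ → ℝ}

lemma setLIntegral_image_shiftSeq_le_geometric (hd : Function.Injective d)
    (hD : ∀ i, |d i| ≤ D) (hp0 : ∀ i, 0 ≤ p i)
    (hρ : IsBernoulliWith (fun i => ENNReal.ofReal (p i)) ρ) (hB' : ∀ c ∈ B', memBtilde m d c)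
    (hM : 0 ≤ M) (htr : ∀ c ∈ B', ∀ r : ℝ, 0 < r →
      volume {α ∈ Icc a b | |Beval c α| < r} < ENNReal.ofReal (M * r))
    (ha : 0 < a) (hb : b < 1) (hl0 : 0 < l) (hl1 : l < 1)
    (hmap : ρ.map (PiOne m d l) = volume.withDensity fun x => ENNReal.ofReal (f x))
    (hf : MemLp f 2 volume) (hr : 0 < r) (k : ℕ) :
    ∫⁻ ω in shiftSeq k '' B', volume {γ ∈ Icc a b | √(Beval ω γ ^ 2 + Beval ω l ^ 2) ≤ r}
        ∂(etaMeasure m d ρ)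
      ≤ ENNReal.ofReal (8 * M * r ^ 2 * ∫ x, f x ^ 2)
        * ENNReal.ofReal ((∑ i, p i ^ 2) / (a * l)) ^ k := by
  have := hρ.1
  set s := ∑ i, p i ^ 2
  set I := ∫ x, f x ^ 2
  have hI : 0 ≤ I := integral_nonneg fun x => sq_nonneg _
  have hsq : ∑ i, ENNReal.ofReal (p i) ^ 2 = ENNReal.ofReal s := by
    simp_rw [s, ENNReal.ofReal_sum_of_nonneg fun i _ => sq_nonneg (p i), ENNReal.ofReal_pow (hp0 _)]
  calc _ ≤ ENNReal.ofReal (M * (2 * r / a ^ k)) * (ρ.prod ρ)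
          {q | (∀ i < k, q.1 i = q.2 i) ∧ |PiOne m d l q.1 - PiOne m d l q.2| ≤ r} :=
        setLIntegral_image_shiftSeq_le hd hD hB' htr ha hb (by rwa [abs_of_pos hl0]) hr k
    _ ≤ ENNReal.ofReal (M * (2 * r / a ^ k)) *
          (ENNReal.ofReal s ^ k * (ENNReal.ofReal (4 * (r / l ^ k)) * ENNReal.ofReal I)) := by
      rw [← hsq]
      gcongr
      exact (hρ.prod_setOf_agree_PiOne_close_le hD hl0 hl1 k r).trans <| by
        gcongr
        exact prod_setOf_abs_sub_le_of_map_eq_withDensity measurable_PiOne hmap hf (by positivity)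
    _ = ENNReal.ofReal (8 * M * r ^ 2 * I) * ENNReal.ofReal (s / (a * l)) ^ k := by
      rw [← ENNReal.ofReal_pow (by positivity), ← ENNReal.ofReal_pow (by positivity),
        ← ENNReal.ofReal_mul (by positivity), ← ENNReal.ofReal_mul (by positivity),
        ← ENNReal.ofReal_mul (by positivity), ← ENNReal.ofReal_mul (by positivity)]
      congr 1
      rw [div_pow, mul_pow]
      field_simp
      ring

lemma lintegral_iUnion_image_shiftSeq_le (hd : Function.Injective d)
    (hD : ∀ i, |d i| ≤ D) (hp0 : ∀ i, 0 ≤ p i)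
    (hρ : IsBernoulliWith (fun i => ENNReal.ofReal (p i)) ρ) (hB' : ∀ c ∈ B', memBtilde m d c)
    (hM : 0 ≤ M) (htr : ∀ c ∈ B', ∀ r : ℝ, 0 < r →
      volume {α ∈ Icc a b | |Beval c α| < r} < ENNReal.ofReal (M * r))
    (ha : 0 < a) (hb : b < 1) (hl0 : 0 < l) (hl1 : l < 1) (hsal : ∑ i, p i ^ 2 < a * l)
    (hmap : ρ.map (PiOne m d l) = volume.withDensity fun x => ENNReal.ofReal (f x))
    (hf : MemLp f 2 volume) (hr : 0 < r) :
    ∫⁻ ω in ⋃ k, shiftSeq k '' B', volume {γ ∈ Icc a b | √(Beval ω γ ^ 2 + Beval ω l ^ 2) ≤ r}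
        ∂(etaMeasure m d ρ)
      ≤ ENNReal.ofReal (8 * M * (∫ x, f x ^ 2) / (1 - (∑ i, p i ^ 2) / (a * l)))
        * ENNReal.ofReal (r ^ 2) := by
  have hq : (∑ i, p i ^ 2) / (a * l) < 1 := (div_lt_one (by positivity)).2 hsal
  have hI : 0 ≤ ∫ x, f x ^ 2 := integral_nonneg fun x => sq_nonneg _
  calc _ ≤ ∑' k, ∫⁻ ω in shiftSeq k '' B',
          volume {γ ∈ Icc a b | √(Beval ω γ ^ 2 + Beval ω l ^ 2) ≤ r} ∂(etaMeasure m d ρ) :=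
        lintegral_iUnion_le _ _
    _ ≤ ∑' k, ENNReal.ofReal (8 * M * r ^ 2 * ∫ x, f x ^ 2)
          * ENNReal.ofReal ((∑ i, p i ^ 2) / (a * l)) ^ k :=
        ENNReal.tsum_le_tsum <| setLIntegral_image_shiftSeq_le_geometric hd hD hp0 hρ hB' hM htr
          ha hb hl0 hl1 hmap hf hr
    _ = _ := by
      rw [ENNReal.tsum_mul_left, ENNReal.tsum_geometric, ← ENNReal.ofReal_one,
        ← ENNReal.ofReal_sub _ (by positivity), ← ENNReal.ofReal_inv_of_pos (by linarith),
        ← ENNReal.ofReal_mul (by positivity), ← ENNReal.ofReal_mul (by positivity)]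
      congr 1
      ring

end Transversality

/-- For a Bernoulli measure `ρ = p^ℕ` with `s = ∑ pᵢ²`, closed intervals
`J₁ × J₂ ⊂ Γ(s,1)` and `J₁` an interval of transversality for `𝓑̃′ = ⋃ₖ x^k 𝓑′`, there is a
constant `C` such that whenever `ν_λ` (for `λ ∈ J₂`) has an `L²` density `f`,
`limsup_{r→0⁺} r^{−2} ∫_{𝓑̃′} Leb{γ ∈ J₁ : |Π_{γ,λ}(ω)| ≤ r} dη(ω) ≤ C‖f‖₂²`. -/
theorem transversality_L2_density_estimate
    (m : ℕ) (d : Fin m → ℝ) (hd : StrictMono d)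
    (p : Fin m → ℝ) (hp0 : ∀ i, 0 ≤ p i)
    (ρ : Measure (ℕ → Fin m)) (hρ : IsBernoulliWith (fun i => ENNReal.ofReal (p i)) ρ)
    (a1 b1 a2 b2 : ℝ) (h1 : a1 ≤ b1) (h2 : a2 ≤ b2)
    (hΓ : Icc a1 b1 ×ˢ Icc a2 b2 ⊆ Gamma m (∑ i, p i ^ 2) 1)
    (B' : Set (ℕ → ℝ)) (hB' : ∀ c ∈ B', memB m d c)
    (htr : IsTransvOn (Icc a1 b1) B') :
    ∃ C : ℝ, 0 < C ∧ ∀ l ∈ Icc a2 b2, ∀ f : ℝ → ℝ,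
      ρ.map (PiOne m d l) = volume.withDensity (fun x => ENNReal.ofReal (f x)) →
      MemLp f 2 volume →
      Filter.limsup
        (fun r : ℝ =>
          (∫⁻ ω in ⋃ k, shiftSeq k '' B',
              volume {g ∈ Icc a1 b1 | Real.sqrt (Beval ω g ^ 2 + Beval ω l ^ 2) ≤ r}
            ∂(etaMeasure m d ρ)) / ENNReal.ofReal (r ^ 2))
        (𝓝[>] (0 : ℝ))
      ≤ ENNReal.ofReal (C * ∫ x, f x ^ 2) := by
  obtain ⟨M, hM, htr⟩ := htr
  obtain ⟨D, hD⟩ := (finite_range fun i => |d i|).bddAbove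
  obtain ⟨ha1, ha12, -, -, hsa, -⟩ := hΓ (mk_mem_prod (left_mem_Icc.2 h1) (left_mem_Icc.2 h2))
  obtain ⟨-, hb1a2, ha21, -⟩ := hΓ (mk_mem_prod (right_mem_Icc.2 h1) (left_mem_Icc.2 h2))
  have ha1a2 : 0 < a1 * a2 := mul_pos ha1 (ha1.trans ha12)
  set u := (∑ i, p i ^ 2) / (a1 * a2)
  have hu : u < 1 := (div_lt_one ha1a2).2 hsa
  refine ⟨8 * M / (1 - u), by have := sub_pos.2 hu; positivity, fun l hl f hmap hf => ?_⟩
  obtain ⟨-, ha1l, hl1, -, hsl, -⟩ := hΓ (mk_mem_prod (left_mem_Icc.2 h1) hl)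
  have hqu : (∑ i, p i ^ 2) / (a1 * l) ≤ u :=
    div_le_div_of_nonneg_left (by positivity) ha1a2 (mul_le_mul_of_nonneg_left hl.1 ha1.le)
  refine limsup_le_of_le (by isBoundedDefault) (eventually_nhdsWithin_of_forall fun r hr => ?_)
  refine ENNReal.div_le_of_le_mul ((lintegral_iUnion_image_shiftSeq_le hd.injective
    (fun i => hD ⟨i, rfl⟩) hp0 hρ (fun c hc => (hB' c hc).1) hM.le htr ha1 (hb1a2.trans ha21)
    (ha1.trans ha1l) hl1 hsl hmap hf hr).trans ?_)
  rw [div_mul_eq_mul_div]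
  gcongr
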